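/- arXiv:2508.11288 — 7 statements merged into one kernel-verified Lean document; each statement's English description precedes it below -/
import Mathlib

section
/- Let V be a nonzero linear subspace of the vector space ℝ^E for a finite set E. Define the support of a vector c as {e ∈ E : c e ≠ 0}. Then the collection of minimal nonempty supports of nonzero vectors in V forms the circuit system of a matroid on E; in particular, for any two distinct minimal supports C₁, C₂ and any e ∈ C₁ ∩ C₂, there exists a minimal support C with C ⊆ (C₁ ∪ C₂) \ {e}. -/
/-- The support of a vector `c : E → ℝ`. -/
def vsupp {E : Type*} (c : E → ℝ) : Set E := {e | c e ≠ 0}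

/-- `C` is a minimal support of a nonzero vector of the subspace `V`. -/
def IsMinSupp {E : Type*} (V : Submodule ℝ (E → ℝ)) (C : Set E) : Prop :=
  (∃ c ∈ V, c ≠ 0 ∧ vsupp c = C) ∧
    ∀ c' ∈ V, c' ≠ 0 → vsupp c' ⊆ C → vsupp c' = C

lemma vsupp_empty_iff {E : Type*} (c : E → ℝ) : vsupp c = ∅ ↔ c = 0 := by
  constructor
  · intro h
    funext x
    by_contra hx
    exact absurd h (Set.nonempty_iff_ne_empty.mp ⟨x, hx⟩)
  · intro h; subst h; ext x; simp [vsupp]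

lemma exists_minsupp {E : Type*} [Fintype E] (V : Submodule ℝ (E → ℝ)) :
    ∀ n (c : E → ℝ), c ∈ V → c ≠ 0 → (vsupp c).ncard ≤ n →
    ∃ C, IsMinSupp V C ∧ C ⊆ vsupp c := by
  intro n
  induction n with
  | zero =>
    intro c hc hc0 hcard
    have : vsupp c = ∅ := by
      have := Set.ncard_eq_zero (Set.toFinite _) |>.mp (Nat.le_zero.mp hcard)
      exact this
    exact absurd (vsupp_empty_iff c |>.mp this) hc0
  | succ n ih =>
    intro c hc hc0 hcard
    by_cases h : ∀ c' ∈ V, c' ≠ 0 → vsupp c' ⊆ vsupp c → vsupp c' = vsupp c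
    · exact ⟨vsupp c, ⟨⟨c, hc, hc0, rfl⟩, h⟩, subset_rfl⟩
    · push_neg at h
      obtain ⟨c', hc', hc'0, hsub, hne⟩ := h
      have hss : vsupp c' ⊂ vsupp c := hsub.ssubset_of_ne hne
      have hlt : (vsupp c').ncard < (vsupp c).ncard :=
        Set.ncard_lt_ncard hss (Set.toFinite _)
      obtain ⟨C, hC, hCsub⟩ := ih c' hc' hc'0 (by omega)
      exact ⟨C, hC, hCsub.trans hsub⟩

/-- The minimal supports of nonzero vectors of a nonzero subspace `V ≤ ℝ^E`
satisfy the circuit elimination axiom. -/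
theorem stmt0 {E : Type*} [Fintype E] (V : Submodule ℝ (E → ℝ)) (hV : V ≠ ⊥)
    (C₁ C₂ : Set E) (h₁ : IsMinSupp V C₁) (h₂ : IsMinSupp V C₂) (hne : C₁ ≠ C₂)
    (e : E) (he : e ∈ C₁ ∩ C₂) :
    ∃ C : Set E, IsMinSupp V C ∧ C ⊆ (C₁ ∪ C₂) \ {e} := by
  obtain ⟨⟨c₁, hc₁V, hc₁0, hs₁⟩, hmin₁⟩ := h₁
  obtain ⟨⟨c₂, hc₂V, hc₂0, hs₂⟩, hmin₂⟩ := h₂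
  obtain ⟨he₁, he₂⟩ := he
  have hc₁e : c₁ e ≠ 0 := by rw [← hs₁] at he₁; exact he₁
  have hc₂e : c₂ e ≠ 0 := by rw [← hs₂] at he₂; exact he₂
  set d : E → ℝ := c₂ e • c₁ - c₁ e • c₂ with hd
  have hdV : d ∈ V := V.sub_mem (V.smul_mem _ hc₁V) (V.smul_mem _ hc₂V)
  have hde : d e = 0 := by simp [hd]; ring
  have hdsub : vsupp d ⊆ (C₁ ∪ C₂) \ {e} := by
    intro x hx
    constructor
    · by_contra hxc
      rw [Set.mem_union] at hxc
      push_neg at hxc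
      obtain ⟨hx1, hx2⟩ := hxc
      rw [← hs₁] at hx1; rw [← hs₂] at hx2
      simp only [vsupp, Set.mem_setOf_eq, not_not] at hx1 hx2
      apply hx
      simp [hd, hx1, hx2]
    · intro hxe
      rw [Set.mem_singleton_iff] at hxe
      subst hxe
      exact hx hde
  have hd0 : d ≠ 0 := by
    intro h0
    apply hne
    have : c₂ e • c₁ = c₁ e • c₂ := by
      have := sub_eq_zero.mp h0
      exact this
    have hsupp : vsupp c₁ = vsupp c₂ := by
      ext x
      simp only [vsupp, Set.mem_setOf_eq]
      have hx := congrFun this x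
      simp only [Pi.smul_apply, smul_eq_mul] at hx
      constructor
      · intro h1 h2
        rw [h2, mul_zero] at hx
        exact (mul_ne_zero hc₂e h1) hx
      · intro h2 h1
        rw [h1, mul_zero] at hx
        exact (mul_ne_zero hc₁e h2) hx.symm
    rw [← hs₁, ← hs₂, hsupp]
  obtain ⟨C, hC, hCsub⟩ := exists_minsupp V (vsupp d).ncard d hdV hd0 le_rfl
  exact ⟨C, hC, hCsub.trans hdsub⟩
end

section
/- Let A be an abelian group and C_n the cycle graph on n ≥ 1 vertices with a coherent orientation around the cycle, where the edges carry signs whose product is −1 (a negative circle). A 1-chain f on the n edges is a flow (i.e., at each vertex v, the signed sum Σ_e [v, e]·f(e) = 0, with incidence numbers determined by the bidirected orientation) if and only if f is constant equal to some a ∈ A with 2a = 0 on all coherently oriented edges. Hence the group of flows on a negative circle over A is isomorphic to the 2-torsion subgroup {a ∈ A : 2a = 0}. -/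
open Finset

private lemma key (n : ℕ) (hn : 1 ≤ n) [NeZero n] (A : Type*) [AddCommGroup A]
    (a b : ZMod n → ℤˣ)
    (hneg : ∏ e : ZMod n, (-(a e : ℤ) * (b e : ℤ)) = -1)
    (f : ZMod n → A) :
    (∀ v : ZMod n, (a (v - 1) : ℤ) • f (v - 1) + (b v : ℤ) • f v = 0) ↔
      ∃ c : A, 2 • c = 0 ∧ ∀ e : ZMod n, f e = c := by
  constructor
  · intro h
    -- recurrence: f (v+1) = (-(a v) * b (v+1)) • f v
    have hrec : ∀ v : ZMod n, f (v + 1) = (-(a v : ℤ) * (b (v + 1) : ℤ)) • f v := by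
      intro v
      have h1 := h (v + 1)
      rw [add_sub_cancel_right] at h1
      have h2 : ((b (v+1) : ℤ) * (a v : ℤ)) • f v + ((b (v+1) : ℤ) * (b (v+1) : ℤ)) • f (v+1)
          = 0 := by
        rw [← smul_smul, ← smul_smul, ← smul_add, h1, smul_zero]
      have hb : (b (v+1) : ℤ) * (b (v+1) : ℤ) = 1 := by
        rcases Int.units_eq_one_or (b (v+1)) with hb | hb <;> rw [hb] <;> norm_num
      rw [hb, one_smul] at h2
      have := eq_neg_of_add_eq_zero_right h2
      rw [this, ← neg_smul]
      congr 1
      ring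
    set ε : ZMod n → ℤ := fun v => -(a v : ℤ) * (b (v + 1) : ℤ) with hε
    have hiter : ∀ k : ℕ, f (k : ZMod n) = (∏ j ∈ Finset.range k, ε (j : ZMod n)) • f 0 := by
      intro k
      induction k with
      | zero => simp
      | succ m ih =>
        rw [Finset.prod_range_succ, Nat.cast_succ, hrec, ih, smul_smul, mul_comm]
    have hprod : (∏ j ∈ Finset.range n, ε (j : ZMod n)) = -1 := by
      have h1 : (∏ j ∈ Finset.range n, ε (j : ZMod n)) = ∏ v : ZMod n, ε v := by
        refine Finset.prod_nbij (fun j => (j : ZMod n)) (fun _ _ => Finset.mem_univ _)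
          ?_ ?_ (fun _ _ => rfl)
        · intro x hx y hy hxy
          simp only [Finset.coe_range, Set.mem_Iio] at hx hy
          have := congrArg ZMod.val hxy
          rwa [ZMod.val_cast_of_lt hx, ZMod.val_cast_of_lt hy] at this
        · intro v _
          exact ⟨v.val, by simpa using v.val_lt, ZMod.natCast_zmod_val v⟩
      have hb1 : ∏ v : ZMod n, (b (v + 1) : ℤ) = ∏ v : ZMod n, (b v : ℤ) :=
        Fintype.prod_equiv (Equiv.addRight (1 : ZMod n)) _ _ (fun _ => rfl)
      have h2 : ∏ v : ZMod n, ε v = ∏ v : ZMod n, (-(a v : ℤ) * (b v : ℤ)) := by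
        rw [hε, Finset.prod_mul_distrib, Finset.prod_mul_distrib, hb1]
      rw [h1, h2, hneg]
    have h0 : f 0 + f 0 = 0 := by
      have := hiter n
      rw [hprod, ZMod.natCast_self] at this
      rw [neg_smul, one_smul] at this
      exact add_eq_zero_iff_eq_neg.mpr this
    have hneg0 : -f 0 = f 0 := by
      rw [neg_eq_iff_add_eq_zero, h0]
    refine ⟨f 0, by rw [two_smul, h0], ?_⟩
    have hconst : ∀ k : ℕ, f (k : ZMod n) = f 0 := by
      intro k
      induction k with
      | zero => simp
      | succ m ih =>
        rw [Nat.cast_succ, hrec, ih]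
        rcases Int.units_eq_one_or (a (m : ZMod n)) with h' | h' <;>
          rcases Int.units_eq_one_or (b ((m : ZMod n) + 1)) with h'' | h'' <;>
          rw [h', h''] <;> simp [hneg0]
    intro e
    rw [← ZMod.natCast_zmod_val e, hconst]
  · rintro ⟨c, hc, hcf⟩
    have hcc : c + c = 0 := by rw [← two_smul ℕ c]; exact hc
    intro v
    rw [hcf, hcf, ← add_smul]
    rcases Int.units_eq_one_or (a (v - 1)) with h1 | h1 <;>
      rcases Int.units_eq_one_or (b v) with h2 | h2 <;>
      rw [h1, h2] <;> simp only [Units.val_one, Units.val_neg] <;> norm_num <;>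
      rw [two_smul ℤ c] <;> norm_num [hcc]

/-- Flows on a negative circle.  The circle has vertex set `ZMod n` and edge set
`ZMod n`, where edge `e` joins vertex `e` to vertex `e + 1`.  A bidirected
orientation of edge `e` is recorded by its incidence numbers: `b e` at its tail
`e` and `a e` at its head `e + 1` (each `±1`; for `n = 1` the edge is a loop and
the two contributions add up, giving incidence `0` or `±2` as usual).  The sign
of edge `e` is `-(a e) * (b e)`, and the circle is negative: the product of the
edge signs is `-1`.  A `1`-chain `f` (values on the chosen arcs) is a flow iff
it is constant, equal to some `c` with `2c = 0`; hence the group of flows is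
isomorphic to the torsion-2 subgroup of `A`. -/
theorem stmt2 (n : ℕ) (hn : 1 ≤ n) [NeZero n] (A : Type*) [AddCommGroup A]
    (a b : ZMod n → ℤˣ)
    (hneg : ∏ e : ZMod n, (-(a e : ℤ) * (b e : ℤ)) = -1)
    (f : ZMod n → A) :
    ((∀ v : ZMod n, (a (v - 1) : ℤ) • f (v - 1) + (b v : ℤ) • f v = 0) ↔
      ∃ c : A, 2 • c = 0 ∧ ∀ e : ZMod n, f e = c) ∧
    Nonempty
      ({g : ZMod n → A //
          ∀ v : ZMod n, (a (v - 1) : ℤ) • g (v - 1) + (b v : ℤ) • g v = 0} ≃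
        {c : A // 2 • c = 0}) := by
  refine ⟨key n hn A a b hneg f, ⟨?_⟩⟩
  refine
    { toFun := fun g => ⟨g.1 0, ?_⟩
      invFun := fun c => ⟨fun _ => c.1, ?_⟩
      left_inv := ?_
      right_inv := ?_ }
  · obtain ⟨c, hc, hcst⟩ := (key n hn A a b hneg g.1).mp g.2
    rw [hcst 0]; exact hc
  · exact (key n hn A a b hneg _).mpr ⟨c.1, c.2, fun _ => rfl⟩
  · rintro ⟨g, hg⟩
    obtain ⟨c, hc, hcst⟩ := (key n hn A a b hneg g).mp hg
    ext e
    simp only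
    rw [hcst e, hcst 0]
  · rintro ⟨c, hc⟩
    rfl
end

section
/- Let A be a finite abelian group, n ≥ 2, and consider the solution set F(0,n) = {(z₁,…,z_n) ∈ Aⁿ : 2z₁ + ⋯ + 2z_n = 0}. Let F_nz(0,n) be its subset of solutions with all z_i ≠ 0. Then |F_nz(0,n)| = |Tor₂(A)|·(|A|−1)^{n−1} − |F_nz(0,n−1)|, where Tor₂(A) = {a ∈ A : 2a = 0}. -/
/-!
The condition `2z₁ + ⋯ + 2zₙ = 0` says that `z₁ + ⋯ + zₙ ∈ Tor₂(A)`. A tuple is determined by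
its first `n - 1` entries and its sum, so there are `|Tor₂(A)|·(|A| - 1)^{n-1}` tuples with
`z₁, …, z_{n-1}` nonzero and sum in `Tor₂(A)`. Those with `zₙ ≠ 0` form `F_nz(0,n)`; those with
`zₙ = 0` are the elements of `F_nz(0,n-1)` extended by `0`.
-/

open Finset

/-- Nowhere-zero flows of the signed graph with one vertex and `n` negative
loops, with coefficients in `A`: tuples of nonzero elements `z` with
`2z₁ + ⋯ + 2zₙ = 0`. -/
def Fnz0 (A : Type*) [AddCommGroup A] (n : ℕ) : Set (Fin n → A) :=
  {z | (∀ i, z i ≠ 0) ∧ ∑ i, 2 • z i = 0}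

section

variable {A : Type*} [AddCommGroup A]

def nonzeroTuplesSumIn (K : Set A) (n : ℕ) : Set (Fin n → A) :=
  {z | (∀ i, z i ≠ 0) ∧ ∑ i, z i ∈ K}

theorem Fnz0_eq_nonzeroTuplesSumIn (n : ℕ) :
    Fnz0 A n = nonzeroTuplesSumIn {a : A | 2 • a = 0} n := by
  ext z
  simp [Fnz0, nonzeroTuplesSumIn, ← smul_sum]

theorem ncard_setOf_forall_ne_zero [Finite A] (k : ℕ) :
    {y : Fin k → A | ∀ i, y i ≠ 0}.ncard = (Nat.card A - 1) ^ k := by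
  have := Fintype.ofFinite A
  classical
  rw [← Nat.card_coe_set_eq]
  change Nat.card {y : Fin k → A // ∀ i, y i ≠ 0} = _
  rw [Nat.card_congr (Equiv.subtypePiEquivPi (p := fun (_ : Fin k) (b : A) => b ≠ 0)),
    Nat.card_pi, prod_const, card_univ, Fintype.card_fin, Nat.card_eq_fintype_card,
    Fintype.card_subtype_compl, Fintype.card_subtype_eq, Nat.card_eq_fintype_card]

def initSumEquiv (k : ℕ) : (Fin (k + 1) → A) ≃ (Fin k → A) × A where
  toFun z := (Fin.init z, ∑ i, z i)
  invFun p := Fin.snoc p.1 (p.2 - ∑ i, p.1 i)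
  left_inv z := by simp [Fin.sum_univ_castSucc, Fin.init, Fin.snoc_init_self]
  right_inv p := by simp [Fin.sum_univ_castSucc, Fin.init_snoc]

theorem initSumEquiv_preimage_eq_union (K : Set A) (k : ℕ) :
    initSumEquiv k ⁻¹' ({y | ∀ i, y i ≠ 0} ×ˢ K) =
      nonzeroTuplesSumIn K (k + 1) ∪ (Fin.snoc · 0) '' nonzeroTuplesSumIn K k := by
  ext z
  simp only [Set.mem_preimage, initSumEquiv, Equiv.coe_fn_mk, Set.mem_prod,
    Set.mem_ofPred_eq, Set.mem_union, Set.mem_image, nonzeroTuplesSumIn]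
  constructor
  · rintro ⟨hinit, hK⟩
    by_cases hlast : z (Fin.last k) = 0
    · refine Or.inr ⟨Fin.init z, ⟨hinit, ?_⟩, ?_⟩
      · simpa [Fin.sum_univ_castSucc, hlast, Fin.init] using hK
      · rw [← hlast, Fin.snoc_init_self]
    · exact Or.inl ⟨Fin.forall_fin_succ'.2 ⟨hinit, hlast⟩, hK⟩
  · rintro (⟨hz, hK⟩ | ⟨y, ⟨hy, hK⟩, rfl⟩)
    · exact ⟨fun i => hz _, hK⟩
    · simpa [Fin.sum_univ_castSucc] using ⟨hy, hK⟩

theorem disjoint_nonzeroTuplesSumIn_image_snoc_zero (K : Set A) (k : ℕ) :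
    Disjoint (nonzeroTuplesSumIn K (k + 1)) ((Fin.snoc · 0) '' nonzeroTuplesSumIn K k) := by
  rw [Set.disjoint_left]
  rintro z ⟨hz, -⟩ ⟨y, -, rfl⟩
  exact hz (Fin.last k) (Fin.snoc_last _ _)

theorem ncard_nonzeroTuplesSumIn_succ_add [Finite A] (K : Set A) (k : ℕ) :
    (nonzeroTuplesSumIn K (k + 1)).ncard + (nonzeroTuplesSumIn K k).ncard =
      K.ncard * (Nat.card A - 1) ^ k := by
  rw [← Set.ncard_image_of_injective (nonzeroTuplesSumIn K k)
      (Fin.snoc_left_injective (α := fun _ => A) 0),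
    ← Set.ncard_union_eq (disjoint_nonzeroTuplesSumIn_image_snoc_zero K k),
    ← initSumEquiv_preimage_eq_union,
    Set.ncard_preimage_of_injective_subset_range (initSumEquiv k).injective (by simp),
    Set.ncard_prod, ncard_setOf_forall_ne_zero, mul_comm]

end

/-- The recurrence `|F_nz(0,n)| = |Tor₂(A)|·(|A|−1)^{n−1} − |F_nz(0,n−1)|`
for `n ≥ 2`. -/
theorem stmt5 (A : Type*) [AddCommGroup A] [Fintype A] (n : ℕ) (hn : 2 ≤ n) :
    (Nat.card (Fnz0 A n) : ℤ) =
      (Nat.card {a : A // 2 • a = 0} : ℤ) * ((Fintype.card A : ℤ) - 1) ^ (n - 1)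
        - Nat.card (Fnz0 A (n - 1)) := by
  obtain ⟨k, rfl⟩ : ∃ k, n = k + 1 := ⟨n - 1, by omega⟩
  have hrec := ncard_nonzeroTuplesSumIn_succ_add {a : A | 2 • a = 0} k
  rw [← Fnz0_eq_nonzeroTuplesSumIn, ← Fnz0_eq_nonzeroTuplesSumIn,
    Nat.card_eq_fintype_card (α := A)] at hrec
  have htor : Nat.card {a : A // 2 • a = 0} = {a : A | 2 • a = 0}.ncard := Nat.card_coe_set_eq _
  rw [Nat.add_sub_cancel, Nat.card_coe_set_eq, Nat.card_coe_set_eq, htor]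
  zify [Fintype.card_pos (α := A)] at hrec
  linarith
end

section
/- Define polynomials φ_{m,n}(t,x) ∈ ℤ[t,x] by φ_{0,0} = 1, φ_{0,n} = t(x−1)^{n−1} − φ_{0,n−1} for n ≥ 1, and φ_{m,n} = (x−1)^{m+n−1} − φ_{m−1,n} for m ≥ 1, n ≥ 0. Then for all m, n ≥ 0, x·φ_{m,n}(t,x) = (x−1)^n·((x−1)^m − (−1)^m) + (−1)^m·t·((x−1)^n − (−1)^n) + (−1)^{m+n}·x. -/
open MvPolynomial

/-- `φ_{0,n}`: `φ_{0,0} = 1` and `φ_{0,n} = t(x−1)^{n−1} − φ_{0,n−1}`,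
with `t = X 0` and `x = X 1`. -/
noncomputable def phi0 : ℕ → MvPolynomial (Fin 2) ℤ
  | 0 => 1
  | n + 1 => X 0 * (X 1 - 1) ^ n - phi0 n

/-- `φ_{m,n}`: additionally `φ_{m,n} = (x−1)^{m+n−1} − φ_{m−1,n}` for `m ≥ 1`. -/
noncomputable def phiMN : ℕ → ℕ → MvPolynomial (Fin 2) ℤ
  | 0, n => phi0 n
  | m + 1, n => (X 1 - 1) ^ (m + n) - phiMN m n

/-- Closed form:
`x·φ_{m,n} = (x−1)^n((x−1)^m − (−1)^m) + (−1)^m t((x−1)^n − (−1)^n) + (−1)^{m+n} x`. -/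
theorem stmt9 (m n : ℕ) :
    X 1 * phiMN m n =
      (X 1 - 1) ^ n * ((X 1 - 1) ^ m - (-1) ^ m)
        + (-1 : MvPolynomial (Fin 2) ℤ) ^ m * X 0 * ((X 1 - 1) ^ n - (-1) ^ n)
        + (-1 : MvPolynomial (Fin 2) ℤ) ^ (m + n) * X 1 := by
  induction m with
  | zero =>
    simp only [phiMN]
    induction n with
    | zero => simp [phi0]
    | succ k ih =>
      simp only [phi0, mul_sub, ih]
      ring
  | succ k ih =>
    simp only [phiMN, mul_sub, ih]
    ring
end

section
/- Let A be a finite abelian group with t = |Tor₂(A)|, x = |A|, and let m, n ≥ 0. The number of tuples (y₁,…,y_m,z₁,…,z_n) ∈ (A∖{0})^{m+n} satisfying y₁+⋯+y_m+2z₁+⋯+2z_n = 0 equals φ_{m,n}(t,x), where x·φ_{m,n}(t,x) = (x−1)^n((x−1)^m − (−1)^m) + (−1)^m t((x−1)^n − (−1)^n) + (−1)^{m+n} x (with the convention that the empty sum condition for m=n=0 counts 1). -/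
open Finset

/-- Nowhere-zero flows of the signed graph with one vertex, `m` outer-edges and
`n` negative loops, with coefficients in `A` (for `m = n = 0` the set is a
singleton, matching the convention that the count is `1`). -/
def FnzMN (A : Type*) [AddCommGroup A] (m n : ℕ) :
    Set ((Fin m → A) × (Fin n → A)) :=
  {p | (∀ i, p.1 i ≠ 0) ∧ (∀ j, p.2 j ≠ 0) ∧ (∑ i, p.1 i) + ∑ j, 2 • p.2 j = 0}

section Aux

noncomputable def cnt (A : Type*) [AddCommGroup A] (m : ℕ) (s : A) : ℕ :=
  Nat.card {y : Fin m → A // (∀ i, y i ≠ 0) ∧ ∑ i, y i = s}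

noncomputable def dcnt (A : Type*) [AddCommGroup A] (n : ℕ) (u : A) : ℕ :=
  Nat.card {z : Fin n → A // (∀ j, z j ≠ 0) ∧ ∑ j, 2 • z j = u}

/-- fibering a subtype by a function value -/
def fiberEquiv {α β : Type*} (P : α → Prop) (f : α → β) :
    {a // P a} ≃ Σ b : β, {a // P a ∧ f a = b} where
  toFun a := ⟨f a.1, a.1, a.2, rfl⟩
  invFun p := ⟨p.2.1, p.2.2.1⟩
  left_inv a := rfl
  right_inv := fun ⟨b, a, h1, h2⟩ => by subst h2; rfl

lemma nat_card_sigma {ι : Type*} [Fintype ι] (f : ι → Type*) [∀ i, Finite (f i)] :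
    Nat.card (Σ i, f i) = ∑ i, Nat.card (f i) := by
  classical
  haveI := fun i => Fintype.ofFinite (f i)
  simp [Nat.card_eq_fintype_card, Fintype.card_sigma]

lemma sum_ite_ne {A β : Type*} [AddCommGroup A] [Fintype A] [DecidableEq A]
    [AddCommGroup β] (f : A → β) :
    ∑ a : A, (if a = 0 then 0 else f a) = (∑ a : A, f a) - f 0 := by
  calc ∑ a : A, (if a = 0 then 0 else f a)
      = ∑ a ∈ univ.erase 0, (if a = 0 then 0 else f a) :=
        (Finset.sum_erase _ (by simp)).symm
    _ = ∑ a ∈ univ.erase 0, f a :=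
        Finset.sum_congr rfl fun a ha => if_neg (Finset.ne_of_mem_erase ha)
    _ = (∑ a : A, f a) - f 0 := Finset.sum_erase_eq_sub (Finset.mem_univ (0:A))

variable {A : Type*} [AddCommGroup A] [Fintype A] [DecidableEq A]

lemma cnt_zero (s : A) : cnt A 0 s = if s = 0 then 1 else 0 := by
  rcases eq_or_ne s 0 with h | h
  · subst h
    rw [if_pos rfl, cnt, Nat.card_eq_one_iff_unique]
    refine ⟨⟨fun a b => ?_⟩, ⟨⟨fun i => i.elim0, fun i => i.elim0, by simp⟩⟩⟩
    ext i; exact i.elim0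
  · rw [if_neg h, cnt]
    haveI : IsEmpty {y : Fin 0 → A // (∀ i, y i ≠ 0) ∧ ∑ i, y i = s} :=
      ⟨fun y => h (by simpa using y.2.2.symm)⟩
    exact Nat.card_of_isEmpty

noncomputable def cntSuccEquiv (m : ℕ) (s : A) :
    {y : Fin (m + 1) → A // (∀ i, y i ≠ 0) ∧ ∑ i, y i = s} ≃
      Σ a : A, {w : Fin m → A // a ≠ 0 ∧ (∀ i, w i ≠ 0) ∧ ∑ i, w i = s - a} where
  toFun y := ⟨y.1 0, Fin.tail y.1, y.2.1 0, fun i => y.2.1 i.succ, by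
    have := y.2.2
    rw [Fin.sum_univ_succ] at this
    simp only [Fin.tail]
    rw [eq_sub_iff_add_eq, add_comm]
    exact this⟩
  invFun p := ⟨Fin.cons p.1 p.2.1, by
    constructor
    · intro i
      refine Fin.cases ?_ ?_ i
      · simpa using p.2.2.1
      · intro j; simpa using p.2.2.2.1 j
    · rw [Fin.sum_univ_succ]
      simp [p.2.2.2.2]⟩
  left_inv y := by
    ext i
    simp [Fin.cons_self_tail]
  right_inv p := by
    ext <;> simp [Fin.tail]

lemma cnt_succ (m : ℕ) (s : A) :
    cnt A (m + 1) s = ∑ a : A, if a = 0 then 0 else cnt A m (s - a) := by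
  rw [cnt, Nat.card_congr (cntSuccEquiv m s), nat_card_sigma]
  refine Finset.sum_congr rfl fun a _ => ?_
  rcases eq_or_ne a 0 with h | h
  · subst h
    rw [if_pos rfl]
    haveI : IsEmpty {w : Fin m → A // (0:A) ≠ 0 ∧ (∀ i, w i ≠ 0) ∧ ∑ i, w i = s - 0} :=
      ⟨fun w => w.2.1 rfl⟩
    exact Nat.card_of_isEmpty
  · rw [if_neg h, cnt]
    exact Nat.card_congr (Equiv.subtypeEquivRight fun w => by tauto)

lemma cnt_total (m : ℕ) : ∑ s : A, cnt A m s = (Fintype.card A - 1) ^ m := by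
  induction m with
  | zero => simp [cnt_zero]
  | succ m ih =>
    have hre : ∀ a : A, ∑ s : A, cnt A m (s - a) = (Fintype.card A - 1) ^ m := by
      intro a
      rw [← ih]
      exact Fintype.sum_equiv (Equiv.subRight a) _ _ fun s => rfl
    calc ∑ s : A, cnt A (m+1) s
        = ∑ s : A, ∑ a : A, if a = 0 then 0 else cnt A m (s - a) := by
          simp [cnt_succ]
      _ = ∑ a : A, if a = 0 then 0 else ∑ s : A, cnt A m (s - a) := by
          rw [Finset.sum_comm]
          exact Finset.sum_congr rfl fun a _ => by split <;> simp
      _ = ∑ a : A, if a = 0 then 0 else (Fintype.card A - 1) ^ m := by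
          exact Finset.sum_congr rfl fun a _ => by rw [hre]
      _ = (Fintype.card A - 1) ^ (m + 1) := by
          rw [Finset.sum_ite, Finset.sum_const, Finset.sum_const]
          have he : (univ.filter fun a : A => ¬a = 0) = univ.erase 0 := by
            ext a; simp
          rw [he, Finset.card_erase_of_mem (mem_univ _), Finset.card_univ]
          simp [pow_succ, mul_comm]

lemma card_cast : ((Fintype.card A - 1 : ℕ) : ℤ) = (Fintype.card A : ℤ) - 1 := by
  rw [Nat.cast_sub Fintype.card_pos]; simp

lemma cnt_key (m : ℕ) (s : A) :
    (Fintype.card A : ℤ) * cnt A m s =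
      ((Fintype.card A : ℤ) - 1) ^ m - (-1) ^ m +
        (if s = 0 then (-1) ^ m * (Fintype.card A : ℤ) else 0) := by
  induction m generalizing s with
  | zero => rw [cnt_zero]; split <;> simp
  | succ m ih =>
    have h1 : (cnt A (m + 1) s : ℤ) = ((Fintype.card A : ℤ) - 1) ^ m - cnt A m s := by
      rw [cnt_succ]
      push_cast [apply_ite (fun k : ℕ => (k : ℤ))]
      rw [sum_ite_ne (fun a => (cnt A m (s - a) : ℤ)), sub_zero]
      congr 1
      rw [show ∑ a : A, (cnt A m (s - a) : ℤ) = ∑ a : A, (cnt A m a : ℤ) from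
        Fintype.sum_equiv (Equiv.subLeft s) _ _ fun a => rfl,
        ← Nat.cast_sum, cnt_total, Nat.cast_pow, card_cast]
    have h2 := ih s
    have hx : (Fintype.card A : ℤ) * cnt A (m + 1) s
        = (Fintype.card A : ℤ) * (((Fintype.card A : ℤ) - 1) ^ m) -
          (Fintype.card A : ℤ) * cnt A m s := by rw [h1]; ring
    rw [hx, h2]
    split <;> ring


lemma dcnt_eq (n : ℕ) (u : A) :
    dcnt A n u = ∑ s : A, if 2 • s = u then cnt A n s else 0 := by
  rw [dcnt, Nat.card_congr (fiberEquiv _ (fun z : Fin n → A => ∑ j, z j)), nat_card_sigma]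
  refine Finset.sum_congr rfl fun s _ => ?_
  rcases eq_or_ne (2 • s) u with h | h
  · rw [if_pos h, cnt]
    refine Nat.card_congr (Equiv.subtypeEquivRight fun z => ?_)
    constructor
    · rintro ⟨⟨hz, hu⟩, hs⟩; exact ⟨hz, hs⟩
    · rintro ⟨hz, hs⟩
      exact ⟨⟨hz, by rw [← Finset.smul_sum, hs, h]⟩, hs⟩
  · rw [if_neg h]
    haveI : IsEmpty {z : Fin n → A //
        ((∀ j, z j ≠ 0) ∧ ∑ j, 2 • z j = u) ∧ ∑ j, z j = s} :=
      ⟨fun z => h (by rw [← z.2.2, Finset.smul_sum]; exact z.2.1.2)⟩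
    exact Nat.card_of_isEmpty

lemma dcnt_total (n : ℕ) : ∑ u : A, dcnt A n u = (Fintype.card A - 1) ^ n := by
  simp only [dcnt_eq]
  rw [Finset.sum_comm]
  have h : ∀ s : A, ∑ u : A, (if 2 • s = u then cnt A n s else 0) = cnt A n s := by
    intro s; rw [Finset.sum_ite_eq]; simp
  simp only [h, cnt_total]

lemma dcnt_zero_key (n : ℕ) :
    (Fintype.card A : ℤ) * dcnt A n 0 =
      (Nat.card {a : A // 2 • a = 0} : ℤ) * (((Fintype.card A : ℤ) - 1) ^ n - (-1) ^ n)
        + (-1) ^ n * (Fintype.card A : ℤ) := by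
  rw [dcnt_eq]
  push_cast [apply_ite (fun k : ℕ => (k : ℤ))]
  rw [Finset.mul_sum]
  have h : ∀ s : A, (Fintype.card A : ℤ) * (if 2 • s = 0 then (cnt A n s : ℤ) else 0)
      = (if 2 • s = 0 then ((Fintype.card A : ℤ) - 1) ^ n - (-1) ^ n else 0)
        + (if s = 0 then (-1) ^ n * (Fintype.card A : ℤ) else 0) := by
    intro s
    rcases eq_or_ne (2 • s) 0 with h | h
    · rw [if_pos h, if_pos h]
      exact cnt_key n s
    · rw [if_neg h, if_neg h, mul_zero, if_neg (fun hs => h (by rw [hs, smul_zero]))]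
      simp
  rw [Finset.sum_congr rfl (fun s _ => h s), Finset.sum_add_distrib]
  congr 1
  · rw [Finset.sum_ite, Finset.sum_const, Finset.sum_const_zero, add_zero,
      Nat.card_eq_fintype_card, Fintype.card_subtype]
    simp [mul_comm]
  · rw [Finset.sum_ite_eq' univ (0 : A)]
    simp

noncomputable def mainEquiv (m n : ℕ) :
    (FnzMN A m n) ≃ Σ u : A, {y : Fin m → A // (∀ i, y i ≠ 0) ∧ ∑ i, y i = u} ×
      {z : Fin n → A // (∀ j, z j ≠ 0) ∧ ∑ j, 2 • z j = -u} where
  toFun p := ⟨∑ i, p.1.1 i, ⟨p.1.1, p.2.1, rfl⟩,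
    ⟨p.1.2, p.2.2.1, eq_neg_of_add_eq_zero_right p.2.2.2⟩⟩
  invFun q := ⟨(q.2.1.1, q.2.2.1), q.2.1.2.1, q.2.2.2.1, by
    rw [q.2.1.2.2, q.2.2.2.2]; simp⟩
  left_inv p := rfl
  right_inv := fun ⟨u, ⟨y, hy1, hy2⟩, ⟨z, hz⟩⟩ => by subst hy2; rfl

lemma main_card (m n : ℕ) :
    (Nat.card (FnzMN A m n) : ℤ) = ∑ u : A, (cnt A m u : ℤ) * dcnt A n (-u) := by
  rw [Nat.card_congr (mainEquiv m n), nat_card_sigma]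
  push_cast [Nat.card_prod]
  rfl

end Aux

/-- With `t = |Tor₂(A)|` and `x = |A|`, the number of nowhere-zero flows equals
`φ_{m,n}(t,x)`, where
`x·φ_{m,n}(t,x) = (x−1)^n((x−1)^m − (−1)^m) + (−1)^m t((x−1)^n − (−1)^n) + (−1)^{m+n} x`. -/
theorem stmt10 (A : Type*) [AddCommGroup A] [Fintype A] (m n : ℕ) :
    (Fintype.card A : ℤ) * Nat.card (FnzMN A m n) =
      ((Fintype.card A : ℤ) - 1) ^ n * (((Fintype.card A : ℤ) - 1) ^ m - (-1) ^ m)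
        + (-1) ^ m * (Nat.card {a : A // 2 • a = 0} : ℤ)
            * (((Fintype.card A : ℤ) - 1) ^ n - (-1) ^ n)
        + (-1) ^ (m + n) * (Fintype.card A : ℤ) := by

  classical
  have hN : (Fintype.card A : ℤ) * Nat.card (FnzMN A m n)
      = ∑ u : A, ((Fintype.card A : ℤ) * cnt A m u) * (dcnt A n (-u) : ℤ) := by
    rw [main_card, Finset.mul_sum]
    exact Finset.sum_congr rfl fun u _ => (mul_assoc _ _ _).symm
  rw [hN]
  have h2 : ∀ u : A, ((Fintype.card A : ℤ) * cnt A m u) * (dcnt A n (-u) : ℤ)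
      = (((Fintype.card A : ℤ) - 1) ^ m - (-1) ^ m) * dcnt A n (-u)
        + (if u = 0 then ((-1) ^ m * (Fintype.card A : ℤ)) * dcnt A n (-u) else 0) := by
    intro u; rw [cnt_key]; split <;> ring
  rw [Finset.sum_congr rfl fun u _ => h2 u, Finset.sum_add_distrib]
  have h3 : ∑ u : A, ((((Fintype.card A : ℤ) - 1) ^ m - (-1) ^ m) * dcnt A n (-u))
      = (((Fintype.card A : ℤ) - 1) ^ m - (-1) ^ m) * ((Fintype.card A : ℤ) - 1) ^ n := by
    rw [← Finset.mul_sum]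
    congr 1
    rw [show ∑ u : A, (dcnt A n (-u) : ℤ) = ∑ u : A, (dcnt A n u : ℤ) from
      Fintype.sum_equiv (Equiv.neg A) _ _ fun u => rfl,
      ← Nat.cast_sum, dcnt_total, Nat.cast_pow, card_cast]
  have h4 : ∑ u : A, (if u = 0 then ((-1 : ℤ) ^ m * (Fintype.card A : ℤ)) * dcnt A n (-u) else 0)
      = (-1) ^ m * ((Fintype.card A : ℤ) * dcnt A n 0) := by
    rw [Finset.sum_ite_eq' univ (0 : A)]
    simp [mul_assoc]
  rw [h3, h4, dcnt_zero_key]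
  ring
end

section
/- Let A be a finite abelian group and V a finite set, n = |V| ≥ 1, and let ν : V → {±1}. Then the subgroup B = {b ∈ A^V : Σ_{v∈V} ν(v)·b(v) ∈ 2A} of A^V is isomorphic to 2A ⊕ A^{n−1}, and the quotient A^V / B is isomorphic to A/2A. -/
open Finset

/-- The doubling homomorphism `a ↦ 2a` of an abelian group. -/
def double (A : Type*) [AddCommGroup A] : A →+ A :=
  AddMonoidHom.mk' (fun a => 2 • a) (fun a b => smul_add 2 a b)

/-- The signed-sum homomorphism `b ↦ Σ_v ν(v)·b(v)` on `A^V`. -/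
def sumHom (V A : Type*) [Fintype V] [AddCommGroup A] (ν : V → ℤˣ) :
    (V → A) →+ A :=
  AddMonoidHom.mk' (fun b => ∑ v, (ν v : ℤ) • b v) (by
    intro b c
    simp [smul_add, Finset.sum_add_distrib])

/-- For a finite abelian group `A`, a finite set `V` with `n = |V| ≥ 1` and a
sign function `ν : V → {±1}`, the subgroup
`B = {b ∈ A^V : Σ_v ν(v)·b(v) ∈ 2A}` is isomorphic to `2A ⊕ A^{n−1}`, and
`A^V / B ≅ A/2A`. -/
theorem stmt14 (A : Type*) [AddCommGroup A] [Fintype A] (V : Type*) [Fintype V]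
    (hV : 1 ≤ Fintype.card V) (ν : V → ℤˣ) :
    Nonempty ((AddSubgroup.comap (sumHom V A ν) (double A).range) ≃+
        ((double A).range × (Fin (Fintype.card V - 1) → A))) ∧
      Nonempty (((V → A) ⧸ AddSubgroup.comap (sumHom V A ν) (double A).range) ≃+
        (A ⧸ (double A).range)) := by
  classical
  obtain ⟨v0⟩ : Nonempty V := Fintype.card_pos_iff.mp hV
  -- splitting of sums over `V` at `v0`
  have hsplit : ∀ f : V → A, ∑ v, f v = f v0 + ∑ v : {v // v ≠ v0}, f v.1 := by
    intro f
    rw [Fintype.sum_eq_add_sum_compl v0]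
    congr 1
    exact (Finset.sum_subtype _ (by simp) f)
  have hν : ∀ (x : A), (ν v0 : ℤ) • (ν v0 : ℤ) • x = x := by
    intro x
    rw [smul_smul, ← Units.val_mul, Int.units_mul_self, Units.val_one, one_smul]
  -- the sign-flipped extension map
  set ext : ↥(double A).range × ({v : V // v ≠ v0} → A) → (V → A) :=
    fun p v => if h : v = v0 then
      (ν v0 : ℤ) • ((p.1 : A) - ∑ w : {v : V // v ≠ v0}, (ν w.1 : ℤ) • p.2 w)
      else p.2 ⟨v, h⟩ with hext
  have hsum_ext : ∀ p, sumHom V A ν (ext p) = (p.1 : A) := by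
    intro p
    show ∑ v, (ν v : ℤ) • ext p v = _
    rw [hsplit (fun v => (ν v : ℤ) • ext p v)]
    have h1 : ext p v0 = (ν v0 : ℤ) •
        ((p.1 : A) - ∑ w : {v : V // v ≠ v0}, (ν w.1 : ℤ) • p.2 w) := by
      simp [hext]
    have h2 : ∀ w : {v : V // v ≠ v0}, ext p w.1 = p.2 w := by
      intro w; simp [hext, w.2]
    rw [h1, hν]
    simp only [h2]
    abel
  have hmem : ∀ p, ext p ∈ AddSubgroup.comap (sumHom V A ν) (double A).range := by
    intro p
    simp only [AddSubgroup.mem_comap, hsum_ext]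
    exact p.1.2
  -- the main isomorphism B ≃+ 2A × (V \ {v0} → A)
  let φ : ↥(AddSubgroup.comap (sumHom V A ν) (double A).range) ≃+
      (↥(double A).range × ({v : V // v ≠ v0} → A)) :=
    { toFun := fun b => (⟨sumHom V A ν b.1, b.2⟩, fun v => b.1 v.1)
      invFun := fun p => ⟨ext p, hmem p⟩
      left_inv := by
        intro b
        apply Subtype.ext
        funext v
        by_cases h : v = v0
        · subst h
          show ext _ v = b.1 v
          simp only [hext, dif_pos rfl]
          have : sumHom V A ν b.1 = (ν v : ℤ) • b.1 v +
              ∑ w : {w : V // w ≠ v}, (ν w.1 : ℤ) • b.1 w.1 :=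
            hsplit (fun u => (ν u : ℤ) • b.1 u)
          rw [this, add_sub_cancel_right, hν]
        · show ext _ v = b.1 v
          simp [hext, h]
      right_inv := by
        intro p
        refine Prod.ext (Subtype.ext ?_) ?_
        · exact hsum_ext p
        · funext v
          show ext p v.1 = p.2 v
          simp [hext, v.2]
      map_add' := by
        intro b c
        refine Prod.ext (Subtype.ext ?_) rfl
        exact map_add (sumHom V A ν) b.1 c.1 }
  -- re-index the complement of `v0` by `Fin (n-1)`
  have hcard : Fintype.card {v : V // v ≠ v0} = Fintype.card V - 1 := by
    simp [Fintype.card_subtype_compl]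
  let e1 : {v : V // v ≠ v0} ≃ Fin (Fintype.card V - 1) :=
    Fintype.equivFinOfCardEq hcard
  let eP : ({v : V // v ≠ v0} → A) ≃+ (Fin (Fintype.card V - 1) → A) :=
    { Equiv.piCongrLeft' (fun _ => A) e1 with map_add' := fun _ _ => rfl }
  refine ⟨⟨φ.trans (AddEquiv.prodCongr (AddEquiv.refl _) eP)⟩, ?_⟩
  -- the quotient isomorphism
  let g : (V → A) →+ A ⧸ (double A).range :=
    (QuotientAddGroup.mk' (double A).range).comp (sumHom V A ν)
  have hker : AddSubgroup.comap (sumHom V A ν) (double A).range = g.ker := by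
    have h := AddMonoidHom.comap_ker (QuotientAddGroup.mk' (double A).range) (sumHom V A ν)
    rwa [QuotientAddGroup.ker_mk'] at h
  have hs : Function.Surjective (sumHom V A ν) := by
    intro a
    refine ⟨fun v => if v = v0 then (ν v0 : ℤ) • a else 0, ?_⟩
    show ∑ v, (ν v : ℤ) • _ = a
    rw [hsplit (fun v => (ν v : ℤ) • if v = v0 then (ν v0 : ℤ) • a else 0)]
    have : ∀ x : { v // v ≠ v0 },
        (ν x.1 : ℤ) • (if x.1 = v0 then (ν v0 : ℤ) • a else 0) = 0 := by
      intro x; simp [x.2]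
    simp [hν, this]
  have hsurj : Function.Surjective g := by
    simpa [g, AddMonoidHom.coe_comp] using
      (QuotientAddGroup.mk'_surjective (double A).range).comp hs
  exact ⟨(QuotientAddGroup.quotientAddEquivOfEq hker).trans
    (QuotientAddGroup.quotientKerEquivOfSurjective g hsurj)⟩
end

section
/- Let A be a finite abelian group and F ≤ A^E a subgroup of functions on a finite set E such that for each S ⊆ E, the subgroup F_{E∖S} = {f ∈ F : f ≡ 0 on E∖S} is isomorphic to Tor₂(A)^{u(S)} × A^{c(S)} for some functions u, c : 𝒫(E) → ℕ. Then the number of nowhere-zero elements of F equals Σ_{S⊆E} (−1)^{|E∖S|} |Tor₂(A)|^{u(S)} |A|^{c(S)}; in particular this count depends on A only through |Tor₂(A)| and |A|, and is given by evaluating the bivariate polynomial P(t,x) = Σ_{S⊆E} (−1)^{|E∖S|} t^{u(S)} x^{c(S)} at (|Tor₂(A)|, |A|). -/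
open Finset

/-- The subgroup `F_{E∖S}` of elements of `F ≤ A^E` vanishing on `E ∖ S`. -/
def vanishOnCompl {E : Type*} [Fintype E] [DecidableEq E] {A : Type*}
    [AddCommGroup A] (F : AddSubgroup (E → A)) (S : Finset E) :
    AddSubgroup (E → A) :=
  F ⊓ AddSubgroup.pi (↑(Sᶜ) : Set E) fun _ => (⊥ : AddSubgroup A)

/-- If for every `S ⊆ E` the subgroup `F_{E∖S}` is isomorphic to
`Tor₂(A)^{u(S)} × A^{c(S)}`, then the number of nowhere-zero elements of `F`
is `Σ_{S⊆E} (−1)^{|E∖S|} |Tor₂(A)|^{u(S)} |A|^{c(S)}`, i.e. the evaluation of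
the bivariate polynomial `P(t,x) = Σ_S (−1)^{|E∖S|} t^{u(S)} x^{c(S)}` at
`(|Tor₂(A)|, |A|)`. -/
theorem stmt18 {E : Type*} [Fintype E] [DecidableEq E] (A : Type*)
    [AddCommGroup A] [Fintype A] (F : AddSubgroup (E → A))
    (u c : Finset E → ℕ)
    (h : ∀ S : Finset E,
      Nonempty ((vanishOnCompl F S) ≃+
        ((Fin (u S) → (double A).ker) × (Fin (c S) → A)))) :
    (Nat.card {f : E → A // f ∈ F ∧ ∀ e : E, f e ≠ 0} : ℤ)
      = ∑ S : Finset E, (-1 : ℤ) ^ Sᶜ.card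
          * (Nat.card (double A).ker : ℤ) ^ (u S)
          * (Fintype.card A : ℤ) ^ (c S) := by
  classical
  -- replace the RHS factors with cardinalities of the vanishing subgroups
  have hcard : ∀ S : Finset E,
      (Nat.card (vanishOnCompl F S) : ℤ)
        = (Nat.card (double A).ker : ℤ) ^ (u S) * (Fintype.card A : ℤ) ^ (c S) := by
    intro S
    obtain ⟨e⟩ := h S
    rw [Nat.card_congr e.toEquiv]
    rw [Nat.card_prod, Nat.card_pi, Nat.card_pi]
    push_cast
    simp
  have hmem : ∀ (S : Finset E) (f : E → A),
      f ∈ vanishOnCompl F S ↔ (f ∈ F ∧ ∀ e ∈ Sᶜ, f e = 0) := by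
    intro S f
    simp [vanishOnCompl, AddSubgroup.mem_inf, AddSubgroup.mem_pi]
  -- count vanishOnCompl via an indicator sum
  have hvcard : ∀ S : Finset E,
      (Nat.card (vanishOnCompl F S) : ℤ)
        = ∑ f : E → A, (if f ∈ F then 1 else 0) * (if ∀ e ∈ Sᶜ, f e = 0 then (1:ℤ) else 0) := by
    intro S
    rw [Nat.card_eq_fintype_card, Fintype.card_subtype]
    rw [← Finset.sum_boole]
    refine Finset.sum_congr rfl fun f _ => ?_
    by_cases h1 : f ∈ F <;> by_cases h2 : ∀ e ∈ Sᶜ, f e = 0 <;>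
      simp [hmem, h1, h2]
  -- the key inclusion–exclusion identity for a fixed f
  have key : ∀ f : E → A,
      (∑ S : Finset E, (-1:ℤ) ^ Sᶜ.card * (if ∀ e ∈ Sᶜ, f e = 0 then (1:ℤ) else 0))
        = if ∀ e : E, f e ≠ 0 then 1 else 0 := by
    intro f
    set Z : Finset E := Finset.univ.filter (fun e => f e = 0) with hZ
    have hcond : ∀ S : Finset E, (∀ e ∈ Sᶜ, f e = 0) ↔ Sᶜ ⊆ Z := by
      intro S
      constructor
      · intro hs e he; simp [hZ, hs e he]
      · intro hs e he; have := hs he; simp [hZ] at this; exact this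
    calc (∑ S : Finset E, (-1:ℤ) ^ Sᶜ.card * (if ∀ e ∈ Sᶜ, f e = 0 then (1:ℤ) else 0))
        = ∑ S : Finset E, (-1:ℤ) ^ S.card * (if S ⊆ Z then (1:ℤ) else 0) := by
          refine Fintype.sum_equiv
            ⟨fun S : Finset E => Sᶜ, fun S => Sᶜ, fun S => compl_compl S,
              fun S => compl_compl S⟩ _ _ fun S => ?_
          simp only [Equiv.coe_fn_mk, hcond]
      _ = ∑ S ∈ Finset.univ.filter (fun S : Finset E => S ⊆ Z), (-1:ℤ) ^ S.card := by
          rw [Finset.sum_filter]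
          refine Finset.sum_congr rfl fun S _ => ?_
          by_cases hs : S ⊆ Z <;> simp [hs]
      _ = ∑ S ∈ Z.powerset, (-1:ℤ) ^ S.card := by
          rw [show Finset.univ.filter (fun S : Finset E => S ⊆ Z) = Z.powerset by
            ext S; simp [Finset.mem_powerset]]
      _ = if Z = ∅ then 1 else 0 := Finset.sum_powerset_neg_one_pow_card
      _ = if ∀ e : E, f e ≠ 0 then 1 else 0 := by
          have hiff : (Z = ∅) ↔ (∀ e : E, f e ≠ 0) := by
            simp [hZ, Finset.filter_eq_empty_iff]
          simp only [hiff]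
  -- put everything together
  rw [Nat.card_eq_fintype_card, Fintype.card_subtype]
  rw [← Finset.sum_boole]
  calc (∑ f : E → A, if f ∈ F ∧ ∀ e : E, f e ≠ 0 then (1:ℤ) else 0)
      = ∑ f : E → A, (if f ∈ F then (1:ℤ) else 0) * (if ∀ e : E, f e ≠ 0 then 1 else 0) := by
        refine Finset.sum_congr rfl fun f _ => ?_
        by_cases h1 : f ∈ F <;> by_cases h2 : ∀ e : E, f e ≠ 0 <;> simp [h1, h2]
    _ = ∑ f : E → A, (if f ∈ F then (1:ℤ) else 0) *
          (∑ S : Finset E, (-1:ℤ) ^ Sᶜ.card * (if ∀ e ∈ Sᶜ, f e = 0 then (1:ℤ) else 0)) := by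
        refine Finset.sum_congr rfl fun f _ => ?_
        rw [key f]
    _ = ∑ S : Finset E, (-1:ℤ) ^ Sᶜ.card *
          ∑ f : E → A, (if f ∈ F then (1:ℤ) else 0) * (if ∀ e ∈ Sᶜ, f e = 0 then (1:ℤ) else 0) := by
        simp_rw [Finset.mul_sum]
        rw [Finset.sum_comm]
        exact Finset.sum_congr rfl fun S _ => Finset.sum_congr rfl fun f _ => by ring
    _ = ∑ S : Finset E, (-1:ℤ) ^ Sᶜ.card
          * (Nat.card (double A).ker : ℤ) ^ (u S) * (Fintype.card A : ℤ) ^ (c S) := by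
        refine Finset.sum_congr rfl fun S _ => ?_
        rw [← hvcard S, hcard S]
        ring
end
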